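/- If the equation x'(t) = L(t)x_t is shadowable, then it has the Perron property: for each bounded continuous function z : [0,∞) → ℝ^d there exists a bounded continuous function x : [-r,∞) → ℝ^d, differentiable on [0,∞), satisfying x'(t) = L(t)x_t + z(t) for all t ≥ 0. -/

import Mathlib

open Set

noncomputable section

/-- The Euclidean state space ℝ^d. -/
abbrev Rd (d : ℕ) : Type := EuclideanSpace ℝ (Fin d)

/-- The phase space C = C([-r,0], ℝ^d) with the supremum norm. -/
abbrev Ph (d : ℕ) (r : ℝ) : Type := C(Set.Icc (-r) (0:ℝ), Rd d)

/-- The segment x_t ∈ C of a continuous function x : ℝ → ℝ^d, x_t(θ) = x(t+θ). -/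
def seg (d : ℕ) (r : ℝ) (x : ℝ → Rd d) (hx : Continuous x) (t : ℝ) : Ph d r :=
  ⟨fun θ => x (t + θ.1), hx.comp (continuous_const.add continuous_subtype_val)⟩

/-- `x` is a solution of x'(t) = L(t)x_t on [s, ∞) (right-hand derivative at s). -/
def IsSol (d : ℕ) (r : ℝ) (L : ℝ → (Ph d r →L[ℝ] Rd d)) (s : ℝ)
    (x : ℝ → Rd d) (hx : Continuous x) : Prop :=
  ∀ t, s ≤ t → HasDerivWithinAt x (L t (seg d r x hx t)) (Set.Ici s) t

/-- `T` is the solution operator family of x'(t) = L(t)x_t :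
for every s ≥ 0 and φ ∈ C there is a solution x on [s,∞) with x_s = φ and x_t = T(t,s)φ. -/
def IsSolOp (d : ℕ) (r : ℝ) (L : ℝ → (Ph d r →L[ℝ] Rd d))
    (T : ℝ → ℝ → (Ph d r →L[ℝ] Ph d r)) : Prop :=
  ∀ s, 0 ≤ s → ∀ φ : Ph d r, ∃ (x : ℝ → Rd d) (hx : Continuous x),
    IsSol d r L s x hx ∧ seg d r x hx s = φ ∧ ∀ t, s ≤ t → seg d r x hx t = T t s φ

/-- The evolution family property of the solution operators. -/
def Cocycle (d : ℕ) (r : ℝ) (T : ℝ → ℝ → (Ph d r →L[ℝ] Ph d r)) : Prop :=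
  (∀ s, 0 ≤ s → T s s = ContinuousLinearMap.id ℝ (Ph d r)) ∧
  ∀ τ t s, 0 ≤ s → s ≤ t → t ≤ τ → T τ s = (T τ t).comp (T t s)

/-- Uniqueness of solutions with a given initial segment at time s. -/
def UniqueSol (d : ℕ) (r : ℝ) (L : ℝ → (Ph d r →L[ℝ] Rd d)) : Prop :=
  ∀ s, 0 ≤ s → ∀ (x y : ℝ → Rd d) (hx : Continuous x) (hy : Continuous y),
    IsSol d r L s x hx → IsSol d r L s y hy → seg d r x hx s = seg d r y hy s →
    ∀ t, s - r ≤ t → x t = y t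

/-- Eq. x'(t) = L(t)x_t is shadowable. -/
def Shadowable (d : ℕ) (r : ℝ) (L : ℝ → (Ph d r →L[ℝ] Rd d)) : Prop :=
  ∀ ε, 0 < ε → ∃ δ, 0 < δ ∧ ∀ (y yd : ℝ → Rd d) (hy : Continuous y),
    ContinuousOn yd (Set.Ici 0) →
    (∀ t, 0 ≤ t → HasDerivWithinAt y (yd t) (Set.Ici 0) t) →
    (∀ t, 0 ≤ t → ‖yd t - L t (seg d r y hy t)‖ ≤ δ) →
    ∃ (x : ℝ → Rd d) (hx : Continuous x), IsSol d r L 0 x hx ∧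
      ∀ t, 0 ≤ t → ‖seg d r x hx t - seg d r y hy t‖ ≤ ε

/-- Eq. x'(t) = L(t)x_t is Hyers–Ulam stable. -/
def HyersUlam (d : ℕ) (r : ℝ) (L : ℝ → (Ph d r →L[ℝ] Rd d)) : Prop :=
  ∃ κ, 0 < κ ∧ ∀ δ, 0 < δ → ∀ (y yd : ℝ → Rd d) (hy : Continuous y),
    ContinuousOn yd (Set.Ici 0) →
    (∀ t, 0 ≤ t → HasDerivWithinAt y (yd t) (Set.Ici 0) t) →
    (∀ t, 0 ≤ t → ‖yd t - L t (seg d r y hy t)‖ ≤ δ) →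
    ∃ (x : ℝ → Rd d) (hx : Continuous x), IsSol d r L 0 x hx ∧
      ∀ t, 0 ≤ t → ‖seg d r x hx t - seg d r y hy t‖ ≤ κ * δ

/-- The stable subspace 𝒮(s) = {φ ∈ C : sup_{t ≥ s} ‖T(t,s)φ‖ < ∞}. -/
def stableSub (d : ℕ) (r : ℝ) (T : ℝ → ℝ → (Ph d r →L[ℝ] Ph d r)) (s : ℝ) :
    Submodule ℝ (Ph d r) where
  carrier := {φ | ∃ M, ∀ t, s ≤ t → ‖T t s φ‖ ≤ M}
  add_mem' := by
    rintro a b ⟨Ma, hMa⟩ ⟨Mb, hMb⟩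
    refine ⟨Ma + Mb, fun t ht => ?_⟩
    calc ‖T t s (a + b)‖ = ‖T t s a + T t s b‖ := by rw [map_add]
    _ ≤ ‖T t s a‖ + ‖T t s b‖ := norm_add_le _ _
    _ ≤ Ma + Mb := add_le_add (hMa t ht) (hMb t ht)
  zero_mem' := ⟨0, fun t ht => by simp⟩
  smul_mem' := by
    rintro c a ⟨Ma, hMa⟩
    refine ⟨‖c‖ * Ma, fun t ht => ?_⟩
    rw [map_smul]
    have h1 : ‖c • (T t s) a‖ = ‖c‖ * ‖(T t s) a‖ := @norm_smul ℝ (Ph d r) _ _ _ _ c _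
    rw [h1]
    exact mul_le_mul_of_nonneg_left (hMa t ht) (norm_nonneg c)

/-- Eq. x'(t) = L(t)x_t admits an exponential dichotomy (with solution operators T). -/
def ExpDich (d : ℕ) (r : ℝ) (T : ℝ → ℝ → (Ph d r →L[ℝ] Ph d r)) : Prop :=
  ∃ (P : ℝ → (Ph d r →L[ℝ] Ph d r)) (D lam : ℝ), 0 < D ∧ 0 < lam ∧
    (∀ t, 0 ≤ t → (P t).comp (P t) = P t) ∧
    (∀ t s, 0 ≤ s → s ≤ t → (P t).comp (T t s) = (T t s).comp (P s)) ∧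
    (∀ t s, 0 ≤ s → s ≤ t →
      Set.BijOn (⇑(T t s)) (LinearMap.ker (P s : Ph d r →ₗ[ℝ] Ph d r) : Set (Ph d r))
        (LinearMap.ker (P t : Ph d r →ₗ[ℝ] Ph d r) : Set (Ph d r))) ∧
    (∀ t s, 0 ≤ s → s ≤ t → ‖(T t s).comp (P s)‖ ≤ D * Real.exp (-lam * (t - s))) ∧
    (∀ t s, 0 ≤ t → t ≤ s → ∀ φ ∈ LinearMap.ker (P t : Ph d r →ₗ[ℝ] Ph d r),
      ‖φ‖ ≤ D * Real.exp (-lam * (s - t)) * ‖T s t φ‖)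

/-!
The inhomogeneous equation with zero initial data is solved by Picard iteration for the Volterra
operator `u ↦ ∫₀^{max t 0} (L(s)u_s + z(s)) ds`: measured against the weight
`exp (2 ∫₀ᵗ (‖L‖ + ‖z‖))`, consecutive iterates differ by a factor `1/2`, so they converge locally
uniformly to a fixed point. If `u` is such a solution and `z` is bounded, then for small `c > 0`
the function `c • u` is a `δ`-pseudo-solution of the homogeneous equation; a solution `x` that
shadows it within `1` yields the solution `c⁻¹ • (c • u - x)` of the inhomogeneous equation,
bounded by `c⁻¹`.
-/

open Filter Topology

section Segment
variable {d : ℕ} {r : ℝ}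

lemma seg_sub (x y : ℝ → Rd d) (hx : Continuous x) (hy : Continuous y) (t : ℝ) :
    seg d r (fun s => x s - y s) (hx.sub hy) t = seg d r x hx t - seg d r y hy t := rfl

lemma seg_smul (c : ℝ) (x : ℝ → Rd d) (hx : Continuous x) (t : ℝ) :
    seg d r (fun s => c • x s) (hx.const_smul c) t = c • seg d r x hx t := rfl

lemma norm_seg_le {x : ℝ → Rd d} (hx : Continuous x) {t M : ℝ} (hM : 0 ≤ M)
    (h : ∀ s, t - r ≤ s → s ≤ t → ‖x s‖ ≤ M) : ‖seg d r x hx t‖ ≤ M :=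
  (ContinuousMap.norm_le _ hM).2 fun θ => h _ (by linarith [θ.2.1]) (by linarith [θ.2.2])

lemma norm_le_norm_seg {x : ℝ → Rd d} (hx : Continuous x) {s t : ℝ} (hs : t - r ≤ s)
    (hst : s ≤ t) : ‖x s‖ ≤ ‖seg d r x hx t‖ := by
  have hθ : s - t ∈ Icc (-r) 0 := ⟨by linarith, by linarith⟩
  simpa [seg] using ContinuousMap.norm_coe_le_norm (seg d r x hx t) ⟨s - t, hθ⟩

lemma continuous_seg {x : ℝ → Rd d} (hx : Continuous x) : Continuous (seg d r x hx) :=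
  (ContinuousMap.curry ⟨fun p : ℝ × Icc (-r) (0 : ℝ) => x (p.1 + p.2.1),
    hx.comp (continuous_fst.add (continuous_subtype_val.comp continuous_snd))⟩).continuous

lemma ContinuousOn.apply_seg {L : ℝ → (Ph d r →L[ℝ] Rd d)} {S : Set ℝ} (hL : ContinuousOn L S)
    {x : ℝ → Rd d} (hx : Continuous x) : ContinuousOn (fun t => L t (seg d r x hx t)) S :=
  hL.clm_apply (continuous_seg hx).continuousOn

end Segment

section Weight
variable {a : ℝ → ℝ}

def expWeight (a : ℝ → ℝ) (t : ℝ) : ℝ := Real.exp (2 * ∫ s in (0 : ℝ)..t, a s)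

lemma expWeight_pos (t : ℝ) : 0 < expWeight a t := Real.exp_pos _

lemma expWeight_zero : expWeight a 0 = 1 := by simp [expWeight]

lemma continuous_expWeight (ha : Continuous a) : Continuous (expWeight a) :=
  Real.continuous_exp.comp (continuous_const.mul
    (intervalIntegral.continuous_primitive (fun _ _ => ha.intervalIntegrable _ _) 0))

lemma monotone_expWeight (ha : Continuous a) (ha0 : ∀ s, 0 ≤ a s) : Monotone (expWeight a) := by
  intro s t hst
  have hsplit : (∫ u in (0 : ℝ)..s, a u) + ∫ u in s..t, a u = ∫ u in (0 : ℝ)..t, a u :=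
    intervalIntegral.integral_add_adjacent_intervals
      (ha.intervalIntegrable 0 s) (ha.intervalIntegrable s t)
  have hnonneg : 0 ≤ ∫ u in s..t, a u := intervalIntegral.integral_nonneg hst fun u _ => ha0 u
  exact Real.exp_le_exp.2 (by linarith)

lemma integral_le_expWeight (ha0 : ∀ s, 0 ≤ a s) {t : ℝ} (ht : 0 ≤ t) :
    ∫ s in (0 : ℝ)..t, a s ≤ expWeight a t := by
  have hnonneg : 0 ≤ ∫ u in (0 : ℝ)..t, a u :=
    intervalIntegral.integral_nonneg ht fun u _ => ha0 u
  rw [expWeight]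
  linarith [Real.add_one_le_exp (2 * ∫ s in (0 : ℝ)..t, a s)]

lemma integral_mul_expWeight (ha : Continuous a) (t : ℝ) :
    ∫ s in (0 : ℝ)..t, a s * expWeight a s = (expWeight a t - 1) / 2 := by
  have hderiv (s : ℝ) : HasDerivAt (fun u => expWeight a u / 2) (a s * expWeight a s) s := by
    have : HasDerivAt (fun u => expWeight a u / 2) (expWeight a s * (2 * a s) / 2) s :=
      (((ha.integral_hasStrictDerivAt 0 s).hasDerivAt.const_mul 2).exp).div_const 2
    convert this using 1
    ring
  rw [intervalIntegral.integral_eq_sub_of_hasDerivAt (fun s _ => hderiv s)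
    ((ha.mul (continuous_expWeight ha)).intervalIntegrable _ _), expWeight_zero]
  ring

end Weight

theorem exists_continuousMap_dist_le_of_dist_le_geometric {X E : Type*} [TopologicalSpace X]
    [LocallyCompactSpace X] [PseudoMetricSpace E] [CompleteSpace E] (f : ℕ → C(X, E))
    {W : X → ℝ} (hW : Continuous W) {q : ℝ} (hq0 : 0 ≤ q) (hq1 : q < 1)
    (h : ∀ n x, dist (f n x) (f (n + 1) x) ≤ W x * q ^ n) :
    ∃ g : C(X, E), ∀ n x, dist (f n x) (g x) ≤ W x * q ^ n / (1 - q) := by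
  choose g hg using fun x =>
    cauchySeq_tendsto_of_complete (cauchySeq_of_le_geometric q (W x) hq1 (h · x))
  have hdist (n x) : dist (f n x) (g x) ≤ W x * q ^ n / (1 - q) :=
    dist_le_of_le_geometric_of_tendsto q (W x) hq1 (h · x) (hg x) n
  have hlim : TendstoLocallyUniformly (fun n x => f n x) g atTop := by
    refine (tendstoLocallyUniformly_iff_forall_isCompact).2 fun K hK => ?_
    obtain ⟨M, hM⟩ := hK.bddAbove_image hW.continuousOn
    have hgeom : Tendsto (fun n => M * q ^ n / (1 - q)) atTop (𝓝 0) := by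
      simpa using ((tendsto_pow_atTop_nhds_zero_of_lt_one hq0 hq1).const_mul M).div_const (1 - q)
    refine Metric.tendstoUniformlyOn_iff.2 fun ε hε => ?_
    filter_upwards [hgeom.eventually (gt_mem_nhds hε)] with n hn x hx
    rw [dist_comm]
    calc dist (f n x) (g x) ≤ W x * q ^ n / (1 - q) := hdist n x
      _ ≤ M * q ^ n / (1 - q) := by
        gcongr
        exact hM ⟨x, hx, rfl⟩
      _ < ε := hn
  exact ⟨⟨g, hlim.continuous (Frequently.of_forall fun n => (f n).continuous)⟩, hdist⟩

section Volterra
variable {d : ℕ} {r : ℝ} (L : C(ℝ, Ph d r →L[ℝ] Rd d)) (z : C(ℝ, Rd d))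

lemma continuous_apply_seg_add (u : C(ℝ, Rd d)) :
    Continuous fun s => L s (seg d r u u.continuous s) + z s :=
  (L.continuous.clm_apply (continuous_seg u.continuous)).add z.continuous

def volterra (u : C(ℝ, Rd d)) : C(ℝ, Rd d) where
  toFun t := ∫ s in (0 : ℝ)..max t 0, (L s (seg d r u u.continuous s) + z s)
  continuous_toFun := (intervalIntegral.continuous_primitive
    (fun _ _ => (continuous_apply_seg_add L z u).intervalIntegrable _ _) 0).comp
    (continuous_id.max continuous_const)

lemma hasDerivWithinAt_volterra (u : C(ℝ, Rd d)) {t : ℝ} (ht : 0 ≤ t) :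
    HasDerivWithinAt (volterra L z u) (L t (seg d r u u.continuous t) + z t) (Ici 0) t := by
  refine ((continuous_apply_seg_add L z u).integral_hasStrictDerivAt 0 t).hasDerivAt
    |>.hasDerivWithinAt.congr (fun s hs => ?_) ?_
  · simp [volterra, max_eq_left (mem_Ici.1 hs)]
  · simp [volterra, max_eq_left ht]

variable {L z} {a : ℝ → ℝ} (ha : Continuous a)
include ha

lemma norm_volterra_sub_le (hLa : ∀ s, ‖L s‖ ≤ a s) {u v : C(ℝ, Rd d)} {C : ℝ}
    (huv : ∀ s, ‖u s - v s‖ ≤ C * expWeight a s) (t : ℝ) :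
    ‖volterra L z u t - volterra L z v t‖ ≤ C / 2 * expWeight a t := by
  have ha0 (s : ℝ) : 0 ≤ a s := (norm_nonneg (L s)).trans (hLa s)
  have hC : 0 ≤ C := nonneg_of_mul_nonneg_left ((norm_nonneg _).trans (huv 0)) (expWeight_pos 0)
  rcases le_total t 0 with ht | ht
  · simpa [volterra, max_eq_right ht] using
      mul_nonneg (div_nonneg hC zero_le_two) (expWeight_pos t).le
  have hseg {s : ℝ} (hs : 0 ≤ s) :
      ‖seg d r u u.continuous s - seg d r v v.continuous s‖ ≤ C * expWeight a s := by
    rw [← seg_sub]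
    refine norm_seg_le _ (mul_nonneg hC (expWeight_pos s).le) fun σ _ hσ => ?_
    exact (huv σ).trans (by gcongr; exact monotone_expWeight ha ha0 hσ)
  have hint (s : ℝ) (hs : s ∈ Icc 0 t) :
      ‖(L s (seg d r u u.continuous s) + z s) - (L s (seg d r v v.continuous s) + z s)‖
        ≤ a s * (C * expWeight a s) := by
    rw [add_sub_add_right_eq_sub, ← map_sub]
    exact (L s).le_of_opNorm_le_of_le (hLa s) (hseg hs.1)
  calc ‖volterra L z u t - volterra L z v t‖
      = ‖∫ s in (0 : ℝ)..t, ((L s (seg d r u u.continuous s) + z s)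
          - (L s (seg d r v v.continuous s) + z s))‖ := by
        simp only [volterra, ContinuousMap.coe_mk, max_eq_left ht]
        rw [intervalIntegral.integral_sub ((continuous_apply_seg_add L z u).intervalIntegrable _ _)
          ((continuous_apply_seg_add L z v).intervalIntegrable _ _)]
    _ ≤ ∫ s in (0 : ℝ)..t, a s * (C * expWeight a s) :=
        intervalIntegral.norm_integral_le_of_norm_le ht (Eventually.of_forall fun s hs =>
          hint s (Ioc_subset_Icc_self hs))
          ((ha.mul (continuous_const.mul (continuous_expWeight ha))).intervalIntegrable _ _)
    _ = C * ((expWeight a t - 1) / 2) := by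
        simp_rw [mul_left_comm (a _) C]
        rw [intervalIntegral.integral_const_mul, integral_mul_expWeight ha]
    _ ≤ C / 2 * expWeight a t := by nlinarith

lemma norm_volterra_zero_le (hza : ∀ s, ‖z s‖ ≤ a s) (t : ℝ) :
    ‖volterra L z 0 t‖ ≤ expWeight a t := by
  have ha0 (s : ℝ) : 0 ≤ a s := (norm_nonneg _).trans (hza s)
  rcases le_total t 0 with ht | ht
  · simpa [volterra, max_eq_right ht] using (expWeight_pos t).le
  have hseg0 (s : ℝ) : seg d r (0 : ℝ → Rd d) continuous_const s = 0 := rfl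
  calc ‖volterra L z 0 t‖ = ‖∫ s in (0 : ℝ)..t, z s‖ := by
        simp [volterra, max_eq_left ht, hseg0]
    _ ≤ ∫ s in (0 : ℝ)..t, a s :=
        intervalIntegral.norm_integral_le_of_norm_le ht
          (Eventually.of_forall fun s _ => hza s) (ha.intervalIntegrable _ _)
    _ ≤ expWeight a t := integral_le_expWeight ha0 ht

end Volterra

section Existence
variable {d : ℕ} {r : ℝ}

lemma norm_iterate_volterra_sub_le {L : C(ℝ, Ph d r →L[ℝ] Rd d)} {z : C(ℝ, Rd d)} {a : ℝ → ℝ}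
    (ha : Continuous a) (hLa : ∀ s, ‖L s‖ ≤ a s) (hza : ∀ s, ‖z s‖ ≤ a s) (n : ℕ) (t : ℝ) :
    ‖(volterra L z)^[n + 1] 0 t - (volterra L z)^[n] 0 t‖ ≤ (1 / 2) ^ n * expWeight a t := by
  induction n generalizing t with
  | zero =>
    simp only [zero_add, Function.iterate_one, Function.iterate_zero, id, ContinuousMap.zero_apply,
      sub_zero, pow_zero, one_mul]
    exact norm_volterra_zero_le ha hza t
  | succ n ih =>
    have := norm_volterra_sub_le (z := z) ha hLa (u := (volterra L z)^[n + 1] 0)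
      (v := (volterra L z)^[n] 0) ih t
    rw [← Function.iterate_succ_apply' (volterra L z) (n + 1),
      ← Function.iterate_succ_apply' (volterra L z) n] at this
    exact this.trans_eq (by ring)

theorem exists_volterra_eq_self (L : C(ℝ, Ph d r →L[ℝ] Rd d)) (z : C(ℝ, Rd d)) :
    ∃ u, volterra L z u = u := by
  set a : ℝ → ℝ := fun s => ‖L s‖ + ‖z s‖
  have ha : Continuous a :=
    (Continuous.norm (E := Ph d r →L[ℝ] Rd d) L.continuous).add z.continuous.norm
  have hLa (s : ℝ) : ‖L s‖ ≤ a s := le_add_of_nonneg_right (norm_nonneg (z s))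
  have hza (s : ℝ) : ‖z s‖ ≤ a s := le_add_of_nonneg_left (norm_nonneg (L s))
  set f : ℕ → C(ℝ, Rd d) := fun n => (volterra L z)^[n] 0
  obtain ⟨u, hu⟩ := exists_continuousMap_dist_le_of_dist_le_geometric f (continuous_expWeight ha)
    (by norm_num) (by norm_num : (1 / 2 : ℝ) < 1) fun n t => by
      rw [dist_comm, dist_eq_norm, mul_comm]
      exact norm_iterate_volterra_sub_le ha hLa hza n t
  have hgeom (C : ℝ) : Tendsto (fun n : ℕ => C * (1 / 2 : ℝ) ^ n) atTop (𝓝 0) := by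
    simpa using (tendsto_pow_atTop_nhds_zero_of_lt_one (r := (1 / 2 : ℝ)) (by norm_num)
      (by norm_num)).const_mul C
  have hdist (n : ℕ) (t : ℝ) : ‖f n t - u t‖ ≤ 2 * (1 / 2) ^ n * expWeight a t := by
    rw [← dist_eq_norm]
    exact (hu n t).trans_eq (by ring)
  refine ⟨u, ContinuousMap.ext fun t =>
    tendsto_nhds_unique (f := fun n => f (n + 1) t) (l := atTop) ?_ ?_⟩
  · refine tendsto_iff_norm_sub_tendsto_zero.2 (squeeze_zero (fun _ => norm_nonneg _)
      (fun n => ?_) (hgeom (expWeight a t)))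
    rw [show f (n + 1) = volterra L z (f n) from Function.iterate_succ_apply' _ n 0]
    exact (norm_volterra_sub_le ha hLa (hdist n) t).trans_eq (by ring)
  · refine tendsto_iff_norm_sub_tendsto_zero.2 (squeeze_zero (fun _ => norm_nonneg _)
      (fun n => ?_) (hgeom (expWeight a t)))
    exact (hdist (n + 1) t).trans_eq (by ring)

end Existence

section Inhomogeneous
variable {d : ℕ} {r : ℝ} {L : ℝ → (Ph d r →L[ℝ] Rd d)}

def IsInhomSol (L : ℝ → (Ph d r →L[ℝ] Rd d)) (z x : ℝ → Rd d) (hx : Continuous x) : Prop :=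
  ∀ t, 0 ≤ t → HasDerivWithinAt x (L t (seg d r x hx t) + z t) (Ici 0) t

theorem exists_isInhomSol_of_continuous (L : C(ℝ, Ph d r →L[ℝ] Rd d)) (z : C(ℝ, Rd d)) :
    ∃ u : C(ℝ, Rd d), IsInhomSol L z u u.continuous := by
  obtain ⟨u, hu⟩ := exists_volterra_eq_self L z
  refine ⟨u, fun t ht => ?_⟩
  have := hasDerivWithinAt_volterra L z u ht
  rwa [hu] at this

theorem exists_isInhomSol {z : ℝ → Rd d} (hL : ContinuousOn L (Ici 0))
    (hz : ContinuousOn z (Ici 0)) : ∃ x hx, IsInhomSol L z x hx := by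
  have hproj : Continuous fun t : ℝ => max t 0 := continuous_id.max continuous_const
  have hmem (t : ℝ) : max t 0 ∈ Ici 0 := le_max_right t 0
  obtain ⟨u, hu⟩ := exists_isInhomSol_of_continuous (d := d) (r := r)
    ⟨fun t => L (max t 0), hL.comp_continuous hproj hmem⟩
    ⟨fun t => z (max t 0), hz.comp_continuous hproj hmem⟩
  exact ⟨u, u.continuous, fun t ht => by simpa [max_eq_left ht] using hu t ht⟩

variable {z x : ℝ → Rd d} {hx : Continuous x}

lemma IsInhomSol.const_smul (h : IsInhomSol L z x hx) (c : ℝ) :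
    IsInhomSol L (fun t => c • z t) (fun t => c • x t) (hx.const_smul c) := fun t ht =>
  ((h t ht).const_smul c).congr_deriv (by rw [smul_add, seg_smul, map_smul])

lemma IsInhomSol.sub_isSol (h : IsInhomSol L z x hx) {y : ℝ → Rd d} {hy : Continuous y}
    (hy' : IsSol d r L 0 y hy) : IsInhomSol L z (fun t => x t - y t) (hx.sub hy) := fun t ht => by
  refine ((h t ht).sub (hy' t ht)).congr_deriv ?_
  rw [seg_sub x y hx hy, map_sub]
  abel

end Inhomogeneous

lemma norm_sub_le_of_norm_seg_sub_le {d : ℕ} {r : ℝ} (hr : 0 ≤ r) {x y : ℝ → Rd d}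
    {hx : Continuous x} {hy : Continuous y} {ε : ℝ}
    (h : ∀ t, 0 ≤ t → ‖seg d r x hx t - seg d r y hy t‖ ≤ ε) {t : ℝ} (ht : -r ≤ t) :
    ‖x t - y t‖ ≤ ε :=
  calc ‖x t - y t‖ ≤ ‖seg d r (fun s => x s - y s) (hx.sub hy) (max t 0)‖ :=
        norm_le_norm_seg (hx.sub hy) (sub_le_iff_le_add.2 (max_le (by linarith) (by linarith)))
          (le_max_left t 0)
    _ = ‖seg d r x hx (max t 0) - seg d r y hy (max t 0)‖ := by rw [seg_sub x y hx hy]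
    _ ≤ ε := h _ (le_max_right t 0)

theorem Shadowable.exists_bounded_isInhomSol {d : ℕ} {r : ℝ} (hr : 0 ≤ r)
    {L : ℝ → (Ph d r →L[ℝ] Rd d)} (hL : ContinuousOn L (Ici 0)) (hsh : Shadowable d r L)
    {z : ℝ → Rd d} (hz : ContinuousOn z (Ici 0)) {B : ℝ} (hB : ∀ t, 0 ≤ t → ‖z t‖ ≤ B)
    {u : ℝ → Rd d} {hu : Continuous u} (hu' : IsInhomSol L z u hu) :
    ∃ x hx, (∃ M, ∀ t, -r ≤ t → ‖x t‖ ≤ M) ∧ IsInhomSol L z x hx := by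
  obtain ⟨δ, hδ, hshadow⟩ := hsh 1 one_pos
  obtain ⟨c, hc, hcz⟩ : ∃ c : ℝ, 0 < c ∧ ∀ t, 0 ≤ t → ‖c • z t‖ ≤ δ := by
    refine ⟨δ / (max B 0 + 1), by positivity, fun t ht => ?_⟩
    rw [norm_smul, Real.norm_of_nonneg (by positivity), div_mul_eq_mul_div,
      div_le_iff₀ (by positivity)]
    gcongr
    linarith [hB t ht, le_max_left B 0]
  have hy := hu'.const_smul c
  obtain ⟨x, hx, hxsol, hclose⟩ := hshadow (fun t => c • u t)
    (fun t => L t (seg d r (fun s => c • u s) (hu.const_smul c) t) + c • z t) (hu.const_smul c)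
    ((hL.apply_seg _).add (hz.const_smul c)) hy (fun t ht => by simpa using hcz t ht)
  refine ⟨fun t => c⁻¹ • (c • u t - x t), ((hu.const_smul c).sub hx).const_smul c⁻¹,
    ⟨c⁻¹, fun t ht => ?_⟩, ?_⟩
  · rw [norm_smul, norm_inv, Real.norm_of_nonneg hc.le, norm_sub_rev]
    exact mul_le_of_le_one_right (inv_nonneg.2 hc.le)
      (norm_sub_le_of_norm_seg_sub_le hr hclose ht)
  · simpa [smul_smul, inv_mul_cancel₀ hc.ne'] using (hy.sub_isSol hxsol).const_smul c⁻¹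

/-- If Eq. x'(t) = L(t)x_t is shadowable, then it has the Perron property:
for every bounded continuous z on [0,∞) the nonhomogeneous equation
x'(t) = L(t)x_t + z(t) has a bounded continuous solution on [-r,∞). -/
theorem stmt2 (d : ℕ) (r : ℝ) (hr : 0 ≤ r)
    (L : ℝ → (Ph d r →L[ℝ] Rd d)) (hL : ContinuousOn L (Set.Ici 0))
    (hsh : Shadowable d r L) :
    ∀ z : ℝ → Rd d, ContinuousOn z (Set.Ici 0) → (∃ B, ∀ t, 0 ≤ t → ‖z t‖ ≤ B) →
      ∃ (x : ℝ → Rd d) (hx : Continuous x),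
        (∃ B, ∀ t, -r ≤ t → ‖x t‖ ≤ B) ∧
        ∀ t, 0 ≤ t → HasDerivWithinAt x (L t (seg d r x hx t) + z t) (Set.Ici 0) t := by
  intro z hz ⟨B, hB⟩
  obtain ⟨u, hu, hu'⟩ := exists_isInhomSol hL hz
  exact hsh.exists_bounded_isInhomSol hr hL hz hB hu'

end
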